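/- MacWilliams identity (Krawtchouk form): for a binary linear [n,k] code C with weight distribution A_i (number of codewords of weight i) and dual weight distribution A_w^⊥, one has for every 0 ≤ w ≤ n: ∑_{i=0}^{n} A_i · P_w(n,i) = 2^k · A_w^⊥, where P_w(n,i) = ∑_{j=0}^{w} (−1)^j · C(i,j) · C(n−i, w−j) is the Krawtchouk polynomial. -/

import Mathlib

/-- Hamming weight of a binary vector. -/
def wt {n : ℕ} (x : Fin n → ZMod 2) : ℕ :=
  (Finset.univ.filter fun i => x i ≠ 0).card

/-- Dual code with respect to the standard bilinear form. -/
def dualCode {n : ℕ} (C : Submodule (ZMod 2) (Fin n → ZMod 2)) :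
    Submodule (ZMod 2) (Fin n → ZMod 2) where
  carrier := {x | ∀ c ∈ C, ∑ i, x i * c i = 0}
  add_mem' := by
    intro a b ha hb c hc
    have ha' := ha c hc
    have hb' := hb c hc
    simp only [Set.mem_setOf_eq, Pi.add_apply, add_mul] at *
    rw [Finset.sum_add_distrib, ha', hb', add_zero]
  zero_mem' := by
    intro c hc
    simp
  smul_mem' := by
    intro r a ha c hc
    have ha' := ha c hc
    simp only [Set.mem_setOf_eq, Pi.smul_apply, smul_eq_mul, mul_assoc] at *
    rw [← Finset.mul_sum, ha', mul_zero]

/-- Minimum distance (minimum nonzero Hamming weight) of a binary linear code. -/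
noncomputable def minDist {n : ℕ} (C : Submodule (ZMod 2) (Fin n → ZMod 2)) : ℕ :=
  sInf {w | ∃ c ∈ C, c ≠ 0 ∧ wt c = w}

/-- Number of codewords of weight `w` in `C` (the weight distribution `A_w`). -/
noncomputable def wtCount {n : ℕ} (C : Submodule (ZMod 2) (Fin n → ZMod 2)) (w : ℕ) : ℕ :=
  Nat.card {c : Fin n → ZMod 2 // c ∈ C ∧ wt c = w}

/-- Krawtchouk polynomial value P_w(n, i). -/
def kraw (n w i : ℕ) : ℤ :=
  ∑ j ∈ Finset.range (w + 1),
    (-1) ^ j * (Nat.choose i j : ℤ) * (Nat.choose (n - i) (w - j) : ℤ)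

/-!
Evaluate `∑_{c ∈ C} ∑_{wt x = w} (-1) ^ (x ⬝ᵥ c)` in both orders. For fixed `c`, a weight-`w`
vector is a `w`-subset `S` of the coordinates and the sign is `(-1) ^ #(S ∩ supp c)`; counting the
`S` that meet `supp c` in `j` points gives `C(wt c, j) * C(n - wt c, w - j)`, so the inner sum is
the Krawtchouk value `P_w(n, wt c)`. For fixed `x`, `c ↦ (-1) ^ (x ⬝ᵥ c)` is a character of `C`,
trivial exactly when `x ∈ C^⊥`, so by orthogonality the inner sum is `2 ^ k` or `0`.
-/

open Finset

def signChar : AddChar (ZMod 2) ℤ :=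
  AddChar.zmodChar 2 (by norm_num : (-1 : ℤ) ^ 2 = 1)

lemma signChar_natCast (m : ℕ) : signChar m = (-1) ^ m :=
  AddChar.zmodChar_apply' _ m

lemma signChar_eq_one_iff {a : ZMod 2} : signChar a = 1 ↔ a = 0 := by
  revert a
  decide

section Support

variable {ι : Type*} [Fintype ι]

def supp (x : ι → ZMod 2) : Finset ι := {i | x i ≠ 0}

variable [DecidableEq ι]

def suppEquiv : (ι → ZMod 2) ≃ Finset ι where
  toFun := supp
  invFun S i := if i ∈ S then 1 else 0
  left_inv x := by
    funext i
    have : ∀ a : ZMod 2, a ≠ 0 → a = 1 := by decide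
    by_cases h : x i = 0
    · simp [supp, h]
    · simp [supp, this _ h]
  right_inv S := by
    ext i
    by_cases h : i ∈ S <;> simp [supp, h]

lemma dotProduct_eq_card_supp_inter (x c : ι → ZMod 2) : x ⬝ᵥ c = #(supp x ∩ supp c) := by
  have h : ∀ a b : ZMod 2, a * b = if a ≠ 0 ∧ b ≠ 0 then 1 else 0 := by decide
  simp only [dotProduct, h, sum_boole, supp, filter_and]

lemma card_powersetCard_filter_card_inter (T : Finset ι) {w j : ℕ} (hj : j ≤ w) :
    #{S ∈ powersetCard w univ | #(S ∩ T) = j} = (#T).choose j * (#Tᶜ).choose (w - j) := by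
  rw [← card_powersetCard, ← card_powersetCard, ← card_product]
  have split : ∀ A B, A ⊆ T → B ⊆ Tᶜ → (A ∪ B) ∩ T = A ∧ (A ∪ B) \ T = B := by
    intro A B hA hB
    constructor <;> ext x <;> grind [mem_compl]
  refine card_nbij' (fun S => (S ∩ T, S \ T)) (fun p => p.1 ∪ p.2) ?_ ?_ ?_ ?_
  all_goals simp only [Set.MapsTo, Set.LeftInvOn, mem_coe, mem_product, mem_powersetCard,
    mem_filter, Prod.forall, Prod.mk.injEq]
  · rintro S ⟨⟨-, hS⟩, hST⟩
    refine ⟨⟨inter_subset_right, hST⟩, fun i => by simp, ?_⟩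
    have := card_sdiff_add_card_inter S T
    omega
  · rintro A B ⟨⟨hA, hAcard⟩, hB, hBcard⟩
    obtain ⟨hinter, hsdiff⟩ := split A B hA hB
    have := card_sdiff_add_card_inter (A ∪ B) T
    rw [hinter, hsdiff] at this
    exact ⟨⟨subset_univ _, by omega⟩, by rw [hinter, hAcard]⟩
  · exact fun S _ => sup_inf_sdiff S T
  · exact fun A B ⟨⟨hA, _⟩, hB, _⟩ => split A B hA hB

lemma sum_powersetCard_neg_one_pow_card_inter (T : Finset ι) (w : ℕ) :
    ∑ S ∈ powersetCard w univ, (-1 : ℤ) ^ #(S ∩ T) = kraw (Fintype.card ι) w #T := by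
  have maps : ∀ S ∈ powersetCard w univ, #(S ∩ T) ∈ range (w + 1) := fun S hS =>
    mem_range_succ_iff.2 ((card_le_card inter_subset_left).trans (mem_powersetCard.1 hS).2.le)
  rw [← sum_fiberwise_of_maps_to maps, kraw]
  refine sum_congr rfl fun j hj => ?_
  rw [sum_congr rfl fun S hS => by rw [(mem_filter.1 hS).2], sum_const,
    card_powersetCard_filter_card_inter T (mem_range_succ_iff.1 hj), card_compl, nsmul_eq_mul]
  push_cast
  ring

end Support

lemma wt_eq_card_supp {n : ℕ} (x : Fin n → ZMod 2) : wt x = #(supp x) := rfl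

lemma sum_filter_wt_signChar_dotProduct {n : ℕ} (c : Fin n → ZMod 2) (w : ℕ) :
    ∑ x with wt x = w, signChar (x ⬝ᵥ c) = kraw n w (wt c) := by
  have h := sum_powersetCard_neg_one_pow_card_inter (supp c) w
  rw [Fintype.card_fin] at h
  rw [wt_eq_card_supp, ← h]
  refine sum_equiv suppEquiv (fun x => ?_) (fun x _ => ?_)
  · rw [mem_filter_univ, mem_powersetCard_univ]
    rfl
  · simp [dotProduct_eq_card_supp_inter, signChar_natCast, suppEquiv]

def dotChar {n : ℕ} (C : Submodule (ZMod 2) (Fin n → ZMod 2)) (x : Fin n → ZMod 2) :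
    AddChar C ℤ where
  toFun c := signChar (x ⬝ᵥ c)
  map_zero_eq_one' := by simp
  map_add_eq_mul' a b := by simp [dotProduct_add, AddChar.map_add_eq_mul]

lemma dotChar_eq_zero_iff {n : ℕ} {C : Submodule (ZMod 2) (Fin n → ZMod 2)}
    {x : Fin n → ZMod 2} : dotChar C x = 0 ↔ x ∈ dualCode C := by
  simp [AddChar.ext_iff, dotChar, signChar_eq_one_iff, dualCode, dotProduct]

open Classical in
lemma sum_code_signChar_dotProduct {n : ℕ} (C : Submodule (ZMod 2) (Fin n → ZMod 2))
    (x : Fin n → ZMod 2) :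
    ∑ c : C, signChar (x ⬝ᵥ c) = if x ∈ dualCode C then 2 ^ Module.finrank (ZMod 2) C else 0 := by
  have := AddChar.sum_eq_ite (dotChar C x)
  rw [Module.card_eq_pow_finrank (K := ZMod 2), ZMod.card] at this
  simp only [dotChar_eq_zero_iff] at this
  exact_mod_cast this

open Classical in
lemma sum_wtCount_mul {n : ℕ} (C : Submodule (ZMod 2) (Fin n → ZMod 2)) (f : ℕ → ℤ) :
    ∑ i ∈ range (n + 1), (wtCount C i : ℤ) * f i = ∑ c : C, f (wt (c : Fin n → ZMod 2)) := by
  have hcount (i : ℕ) : wtCount C i = #{c : C | wt (c : Fin n → ZMod 2) = i} := by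
    rw [wtCount, ← Nat.card_congr (Equiv.subtypeSubtypeEquivSubtypeInter (· ∈ C) (wt · = i)),
      Nat.card_eq_fintype_card, Fintype.card_subtype]
  have maps : ∀ c ∈ (univ : Finset C), wt (c : Fin n → ZMod 2) ∈ range (n + 1) := fun c _ =>
    mem_range_succ_iff.2 ((card_le_univ _).trans_eq (Fintype.card_fin n))
  simp only [hcount, ← sum_fiberwise_of_maps_to' maps f, sum_const, nsmul_eq_mul]

lemma wtCount_eq_card {n : ℕ} (C : Submodule (ZMod 2) (Fin n → ZMod 2)) (w : ℕ)
    [DecidablePred (· ∈ C)] : wtCount C w = #{c | c ∈ C ∧ wt c = w} := by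
  rw [wtCount, Nat.card_eq_fintype_card, Fintype.card_subtype]

theorem stmt_6_general (n k : ℕ) (C : Submodule (ZMod 2) (Fin n → ZMod 2))
    (hk : Module.finrank (ZMod 2) C = k) (w : ℕ) :
    ∑ i ∈ Finset.range (n + 1), (wtCount C i : ℤ) * kraw n w i =
      2 ^ k * (wtCount (dualCode C) w : ℤ) := by
  classical
  calc ∑ i ∈ range (n + 1), (wtCount C i : ℤ) * kraw n w i
      = ∑ c : C, ∑ x with wt x = w, signChar (x ⬝ᵥ (c : Fin n → ZMod 2)) := by
        simp only [sum_wtCount_mul, sum_filter_wt_signChar_dotProduct]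
    _ = ∑ x with wt x = w, ∑ c : C, signChar (x ⬝ᵥ (c : Fin n → ZMod 2)) := sum_comm
    _ = ∑ x with wt x = w, if x ∈ dualCode C then 2 ^ k else 0 := by
        simp only [sum_code_signChar_dotProduct, hk]
    _ = 2 ^ k * (wtCount (dualCode C) w : ℤ) := by
        rw [← sum_filter, sum_const, wtCount_eq_card, filter_filter, nsmul_eq_mul, mul_comm]
        simp only [and_comm]

/-- The MacWilliams identities in Krawtchouk form. -/
theorem stmt_6 (n k : ℕ) (C : Submodule (ZMod 2) (Fin n → ZMod 2))
    (hk : Module.finrank (ZMod 2) C = k) (w : ℕ) (hw : w ≤ n) :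
    ∑ i ∈ Finset.range (n + 1), (wtCount C i : ℤ) * kraw n w i =
      2 ^ k * (wtCount (dualCode C) w : ℤ) :=
  stmt_6_general n k C hk w
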